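/- arXiv:0801.0350 — 3 statements merged into one kernel-verified Lean document; each statement's English description precedes it below -/
import Mathlib

section
/- A set Z ⊆ ℕ is constructively immune if and only if Z is infinite and its complement ℕ \ Z is constructively Σ⁰₁-dense. -/
/-- A standard acceptable enumeration of the r.e. subsets of ℕ:
`W i` is the domain of the `i`-th partial recursive function. -/
def W (i : ℕ) : Set ℕ :=
  {x | ((Denumerable.ofNat Nat.Partrec.Code i).eval x).Dom}

/-- `Z` is constructively immune: `Z` is infinite and some partial recursive `φ`
picks, from each index `i` of an infinite r.e. set, an element of `W i \ Z`. -/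
def ConstructivelyImmune (Z : Set ℕ) : Prop :=
  Z.Infinite ∧ ∃ φ : ℕ →. ℕ, Partrec φ ∧
    ∀ i, (W i).Infinite → ∃ y ∈ φ i, y ∈ W i ∧ y ∉ Z

/-- `D` is constructively Σ⁰₁-dense: a total recursive `l` produces, from each index
`i` of an infinite r.e. set, an index of an infinite r.e. subset of `D ∩ W i`. -/
def ConstructivelySigma01Dense (D : Set ℕ) : Prop :=
  ∃ l : ℕ → ℕ, Computable l ∧
    ∀ i, (W i).Infinite → (W (l i)).Infinite ∧ W (l i) ⊆ D ∩ W i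


/-!
(⇐) Given the density function `λ`, output the first element enumerated into `W (λ i)`.

(⇒) By s-m-n there is a computable `F` with `W (F j) = {x ∈ W j | φ j < x}`. If `W i` is
infinite then so is every `W (F^[k] i) ⊆ W i`, hence the values `φ (F^[k] i)` lie in `W i \ Z`
and strictly increase; the r.e. set of these values, whose index is computable from `i`, is an
infinite subset of `Zᶜ ∩ W i`.
-/

open Nat.Partrec (Code)
open Nat.Partrec.Code

section Closure

variable {α σ : Type*} [Primcodable α] [Primcodable σ]

theorem Computable.nat_iterate {f : α → ℕ} {g : α → σ} {h : α → σ → σ} (hf : Computable f)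
    (hg : Computable g) (hh : Computable₂ h) : Computable fun a => (h a)^[f a] (g a) :=
  (Computable.nat_rec hf hg (hh.comp Computable.fst (Computable.snd.comp Computable.snd)).to₂).of_eq
    fun a => by induction f a <;> simp [*, -Function.iterate_succ, Function.iterate_succ']

theorem REPred.and {p q : α → Prop} (hp : REPred p) (hq : REPred q) :
    REPred fun a => p a ∧ q a :=
  (hp.bind (hq.comp Computable.fst).to₂).of_eq fun a => by
    ext; simp [Part.mem_assert_iff]

theorem REPred.exists_mem {f : α →. σ} {r : α → σ → Prop} (hf : Partrec f)
    (hr : REPred fun q : α × σ => r q.1 q.2) : REPred fun a => ∃ v ∈ f a, r a v :=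
  (hf.bind hr.to₂).dom_re.of_eq fun a => by simp [Part.dom_iff_mem]

end Closure

section Selector

variable {α : Type*} [Primcodable α]

theorem REPred.exists_partrec_selector {p : α → ℕ → Prop}
    (hp : REPred fun q : α × ℕ => p q.1 q.2) :
    ∃ f : α →. ℕ, Partrec f ∧ ∀ a, ((f a).Dom ↔ ∃ n, p a n) ∧ ∀ n ∈ f a, p a n := by
  obtain ⟨c, hc⟩ := exists_code.1 hp
  have hc_dom : ∀ a n, (eval c (Encodable.encode (a, n))).Dom ↔ p a n := fun a n => by
    simp [hc, Encodable.encodek, Part.assert]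
  -- search over pairs `⟪n, k⟫`: a candidate witness `n` and a step bound `k` for `eval c`
  let f : α →. ℕ := fun a => Nat.rfindOpt fun m =>
    (evaln m.unpair.2 c (Encodable.encode (a, m.unpair.1))).map fun _ => m.unpair.1
  have hf : Partrec f := by
    refine Partrec.rfindOpt (Computable.option_map ?_ ?_)
    · exact primrec_evaln.to_comp.comp
        (((Primrec.snd.comp (Primrec.unpair.comp Primrec.snd)).to_comp.pair
          (Computable.const c)).pair
          (Computable.encode.comp (Computable.fst.pair
            (Primrec.fst.comp (Primrec.unpair.comp Primrec.snd)).to_comp)))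
    · exact (Primrec.fst.comp (Primrec.unpair.comp (Primrec.snd.comp Primrec.fst))).to_comp.to₂
  have hf_sound : ∀ a, ∀ n ∈ f a, p a n := fun a n hn => by
    obtain ⟨m, hm⟩ := Nat.rfindOpt_spec hn
    obtain ⟨x, hx, rfl⟩ := Option.map_eq_some_iff.1 hm
    exact (hc_dom a _).1 (Part.dom_iff_mem.2 ⟨x, evaln_sound hx⟩)
  refine ⟨f, hf, fun a => ⟨⟨fun h => ⟨_, hf_sound a _ (Part.get_mem h)⟩, ?_⟩, hf_sound a⟩⟩
  rintro ⟨n, hn⟩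
  obtain ⟨x, hx⟩ := Part.dom_iff_mem.1 ((hc_dom a n).2 hn)
  obtain ⟨k, hk⟩ := evaln_complete.1 hx
  exact Nat.rfindOpt_dom.2 ⟨Nat.pair n k, n, by
    simpa only [Nat.unpair_pair, Option.mem_def, Option.map_eq_some_iff] using ⟨x, hk, trivial⟩⟩

theorem REPred.exists {p : α → ℕ → Prop} (hp : REPred fun q : α × ℕ => p q.1 q.2) :
    REPred fun a => ∃ n, p a n :=
  let ⟨_, hf, H⟩ := hp.exists_partrec_selector
  hf.dom_re.of_eq fun a => (H a).1

end Selector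

theorem mem_W_re : REPred fun q : ℕ × ℕ => q.2 ∈ W q.1 :=
  (eval_part.comp ((Computable.ofNat Code).comp Computable.fst) Computable.snd).dom_re

theorem REPred.exists_computable_W_eq {p : ℕ → ℕ → Prop}
    (hp : REPred fun q : ℕ × ℕ => p q.1 q.2) :
    ∃ s : ℕ → ℕ, Computable s ∧ ∀ j, W (s j) = {x | p j x} := by
  have hg : Partrec fun n : ℕ =>
      (Part.assert (p n.unpair.1 n.unpair.2) fun _ => Part.some ()).map fun _ => 0 :=
    (hp.comp Computable.unpair).map (Computable.const 0).to₂
  obtain ⟨c, hc⟩ := exists_code.1 (Partrec.nat_iff.1 hg)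
  refine ⟨fun j => Encodable.encode (curry c j),
    (Primrec.encode.comp (primrec₂_curry.comp (Primrec.const c) Primrec.id)).to_comp,
    fun j => Set.ext fun x => ?_⟩
  simp [W, hc, Part.assert]

theorem exists_partrec_mem_W :
    ∃ pick : ℕ →. ℕ, Partrec pick ∧ ∀ j, (W j).Nonempty → ∃ y ∈ pick j, y ∈ W j := by
  obtain ⟨pick, hpick, H⟩ := REPred.exists_partrec_selector (p := fun j x => x ∈ W j) mem_W_re
  exact ⟨pick, hpick, fun j hj =>
    ⟨_, Part.get_mem ((H j).1.2 hj), (H j).2 _ (Part.get_mem _)⟩⟩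

theorem exists_computable_W_eq_sep {φ : ℕ →. ℕ} (hφ : Partrec φ) :
    ∃ F : ℕ → ℕ, Computable F ∧ ∀ j, W (F j) = {x ∈ W j | ∃ v ∈ φ j, v < x} := by
  have hlt : REPred fun r : (ℕ × ℕ) × ℕ => r.2 < r.1.2 :=
    (PrimrecRel.comp Primrec.nat_lt Primrec.snd (Primrec.snd.comp Primrec.fst)).computablePred.to_re
  have hgt : REPred fun q : ℕ × ℕ => ∃ v ∈ φ q.1, v < q.2 :=
    REPred.exists_mem (r := fun q v => v < q.2) (hφ.comp Computable.fst) hlt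
  exact REPred.exists_computable_W_eq (p := fun j x => x ∈ W j ∧ ∃ v ∈ φ j, v < x)
    (mem_W_re.and hgt)

theorem exists_computable_W_eq_orbit {φ : ℕ →. ℕ} {F : ℕ → ℕ} (hφ : Partrec φ)
    (hF : Computable F) :
    ∃ l : ℕ → ℕ, Computable l ∧ ∀ i, W (l i) = {y | ∃ k, y ∈ φ (F^[k] i)} := by
  have hφF : Partrec fun r : (ℕ × ℕ) × ℕ => φ (F^[r.2] r.1.1) :=
    hφ.comp (Computable.nat_iterate Computable.snd (Computable.fst.comp Computable.fst)
      (hF.comp Computable.snd).to₂)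
  have heq : REPred fun t : ((ℕ × ℕ) × ℕ) × ℕ => t.2 = t.1.1.2 :=
    (PrimrecRel.comp Primrec.eq Primrec.snd
      (Primrec.snd.comp (Primrec.fst.comp Primrec.fst))).computablePred.to_re
  have horbit : REPred fun r : (ℕ × ℕ) × ℕ => r.1.2 ∈ φ (F^[r.2] r.1.1) :=
    (REPred.exists_mem (r := fun a v => v = a.1.2) hφF heq).of_eq fun r => by simp
  exact REPred.exists_computable_W_eq
    (REPred.exists (p := fun (q : ℕ × ℕ) k => q.2 ∈ φ (F^[k] q.1)) horbit)

section Shrinking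

variable {V : ℕ → Set ℕ} {Z : Set ℕ} {φ : ℕ →. ℕ} {F : ℕ → ℕ}

theorem infinite_iterate_subset (hφ : ∀ j, (V j).Infinite → ∃ y ∈ φ j, y ∈ V j ∧ y ∉ Z)
    (hF : ∀ j, V (F j) = {x ∈ V j | ∃ v ∈ φ j, v < x}) {i : ℕ} (hi : (V i).Infinite) (k : ℕ) :
    (V (F^[k] i)).Infinite ∧ V (F^[k] i) ⊆ V i := by
  induction k with
  | zero => exact ⟨hi, subset_rfl⟩
  | succ k ih =>
    obtain ⟨v, hv, -⟩ := hφ _ ih.1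
    have hsub : V (F^[k] i) \ {x | x ≤ v} ⊆ V (F^[k + 1] i) := fun x hx => by
      rw [Function.iterate_succ_apply', hF]
      exact ⟨hx.1, v, hv, not_le.1 hx.2⟩
    have hsup : V (F^[k + 1] i) ⊆ V (F^[k] i) := by
      rw [Function.iterate_succ_apply', hF]
      exact Set.sep_subset _ _
    exact ⟨(ih.1.sdiff (Set.finite_le_nat v)).mono hsub, hsup.trans ih.2⟩

theorem infinite_orbit_subset (hφ : ∀ j, (V j).Infinite → ∃ y ∈ φ j, y ∈ V j ∧ y ∉ Z)
    (hF : ∀ j, V (F j) = {x ∈ V j | ∃ v ∈ φ j, v < x}) {i : ℕ} (hi : (V i).Infinite) :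
    {y | ∃ k, y ∈ φ (F^[k] i)}.Infinite ∧ {y | ∃ k, y ∈ φ (F^[k] i)} ⊆ Zᶜ ∩ V i := by
  have hiter := infinite_iterate_subset hφ hF hi
  choose v hv hvV hvZ using fun k => hφ _ (hiter k).1
  have hv_mono : StrictMono v := strictMono_nat_of_lt_succ fun k => by
    have h := hvV (k + 1)
    rw [Function.iterate_succ_apply', hF] at h
    obtain ⟨-, w, hw, hlt⟩ := h
    rwa [Part.mem_unique hw (hv k)] at hlt
  have horbit : {y | ∃ k, y ∈ φ (F^[k] i)} = Set.range v :=
    Set.ext fun y => exists_congr fun k => ⟨fun hy => Part.mem_unique (hv k) hy, fun h => h ▸ hv k⟩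
  rw [horbit]
  exact ⟨Set.infinite_range_of_injective hv_mono.injective,
    Set.range_subset_iff.2 fun k => ⟨hvZ k, (hiter k).2 (hvV k)⟩⟩

end Shrinking

theorem ConstructivelyImmune.constructivelySigma01Dense_compl {Z : Set ℕ}
    (hZ : ConstructivelyImmune Z) : ConstructivelySigma01Dense Zᶜ := by
  obtain ⟨-, φ, hφ, hφZ⟩ := hZ
  obtain ⟨F, hF, hFW⟩ := exists_computable_W_eq_sep hφ
  obtain ⟨l, hl, hlW⟩ := exists_computable_W_eq_orbit hφ hF
  exact ⟨l, hl, fun i hi => hlW i ▸ infinite_orbit_subset hφZ hFW hi⟩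

theorem ConstructivelySigma01Dense.constructivelyImmune {Z : Set ℕ} (hZ : Z.Infinite)
    (hD : ConstructivelySigma01Dense Zᶜ) : ConstructivelyImmune Z := by
  obtain ⟨l, hl, hlW⟩ := hD
  obtain ⟨pick, hpick, hpickW⟩ := exists_partrec_mem_W
  refine ⟨hZ, fun i => pick (l i), hpick.comp hl, fun i hi => ?_⟩
  obtain ⟨hinf, hsub⟩ := hlW i hi
  obtain ⟨y, hy, hyW⟩ := hpickW (l i) hinf.nonempty
  exact ⟨y, hy, (hsub hyW).2, (hsub hyW).1⟩

theorem constructivelyImmune_iff (Z : Set ℕ) :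
    ConstructivelyImmune Z ↔ Z.Infinite ∧ ConstructivelySigma01Dense Zᶜ :=
  ⟨fun h => ⟨h.1, h.constructivelySigma01Dense_compl⟩, fun h => h.2.constructivelyImmune h.1⟩
end

section
/- Let C, D be families of subsets of ℕ, and F a family of total functions ℕ → ℕ containing the identity. If e ≪[B,C]F f and f ≪[C,D]G g (where G contains the identity), then e ≪[B,D]G g. Here f ≪[C,D]F g means: for every total φ ∈ F tending to +∞, the set {x : f(x) < φ(g(x))} is (C,D)-dense. -/
def CDDense (S T : Set (Set ℕ)) (Z : Set ℕ) : Prop :=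
  ∀ X ∈ S, X.Infinite → ∃ Y ∈ T, Y.Infinite ∧ Y ⊆ Z ∩ X

def TendsInfty (f : ℕ → ℕ) : Prop := Filter.Tendsto f Filter.atTop Filter.atTop

/-- `f ≪[C,D]F g`: for every total `φ ∈ F` tending to `+∞`,
`{x : f x < φ (g x)}` is `(C,D)`-dense. -/
def Often (C D : Set (Set ℕ)) (F : Set (ℕ → ℕ)) (f g : ℕ → ℕ) : Prop :=
  ∀ φ ∈ F, TendsInfty φ → CDDense C D {x | f x < φ (g x)}

namespace CDDense

theorem mono {S T : Set (Set ℕ)} {Z Z' : Set ℕ} (h : CDDense S T Z) (hZ : Z ⊆ Z') :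
    CDDense S T Z' := by
  intro X hX hXinf
  obtain ⟨Y, hYT, hYinf, hY⟩ := h X hX hXinf
  exact ⟨Y, hYT, hYinf, hY.trans (Set.inter_subset_inter_left X hZ)⟩

theorem inter {B C D : Set (Set ℕ)} {Z₁ Z₂ : Set ℕ} (h₁ : CDDense B C Z₁)
    (h₂ : CDDense C D Z₂) : CDDense B D (Z₁ ∩ Z₂) := by
  intro X hX hXinf
  obtain ⟨Y, hYC, hYinf, hYX⟩ := h₁ X hX hXinf
  obtain ⟨W, hWD, hWinf, hWY⟩ := h₂ Y hYC hYinf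
  refine ⟨W, hWD, hWinf, fun x hx => ?_⟩
  obtain ⟨hx₂, hxY⟩ := hWY hx
  obtain ⟨hx₁, hxX⟩ := hYX hxY
  exact ⟨⟨hx₁, hx₂⟩, hxX⟩

end CDDense

theorem Often.cdDense_lt {C D : Set (Set ℕ)} {F : Set (ℕ → ℕ)} {f g : ℕ → ℕ}
    (h : Often C D F f g) (hF : id ∈ F) : CDDense C D {x | f x < g x} :=
  h id hF Filter.tendsto_id

theorem often_trans_general (B C D : Set (Set ℕ)) (F G : Set (ℕ → ℕ)) (e f g : ℕ → ℕ)
    (hF : id ∈ F)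
    (h1 : Often B C F e f) (h2 : Often C D G f g) :
    Often B D G e g := fun φ hφ hφ_tendsto =>
  ((h1.cdDense_lt hF).inter (h2 φ hφ hφ_tendsto)).mono fun x ⟨hef, hfg⟩ =>
    show e x < φ (g x) from hef.trans hfg

theorem often_trans (B C D : Set (Set ℕ)) (F G : Set (ℕ → ℕ)) (e f g : ℕ → ℕ)
    (hF : id ∈ F) (hG : id ∈ G)
    (h1 : Often B C F e f) (h2 : Often C D G f g) :
    Often B D G e g :=
  often_trans_general B C D F G e f g hF h1 h2
end

section
/- Let F be a class of total monotone increasing functions ℕ → ℕ closed under input and output translation (φ ∈ F, c ⟹ z ↦ max(0, φ(max(0,z−c)) − c) ∈ F, still tending to +∞). Define f ⋘↑ g by: f ≤ct g and for every φ ∈ F tending to +∞ the set {x : f(x) < φ(g(x))} is (C,D)-dense. Then e ≤ct f, f ⋘↑ g, and g ≤ct h together imply e ⋘↑ h. -/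
def LeCt (f g : ℕ → ℕ) : Prop := ∃ c, ∀ x, f x ≤ g x + c

/-- `f ⋘↑ g` for the class `F` of monotone functions. -/
def Lll (C D : Set (Set ℕ)) (F : Set (ℕ → ℕ)) (f g : ℕ → ℕ) : Prop :=
  LeCt f g ∧ Often C D F f g

/-! Shifting `φ` by a constant `c` bounding both `e ≤ct f` and `g ≤ct h` gives
`ψ z = φ (z - c) - c` in `F` with `{x | f x < ψ (g x)} ⊆ {x | e x < φ (h x)}`, and
`(C,D)`-density passes to supersets. -/

theorem LeCt.trans {f g h : ℕ → ℕ} (hfg : LeCt f g) (hgh : LeCt g h) : LeCt f h := by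
  obtain ⟨c, hc⟩ := hfg
  obtain ⟨d, hd⟩ := hgh
  exact ⟨c + d, fun x => by have := hc x; have := hd x; omega⟩

theorem CDDense.mono_s15 {S T : Set (Set ℕ)} {Z Z' : Set ℕ} (hZ : CDDense S T Z) (hZZ' : Z ⊆ Z') :
    CDDense S T Z' := by
  intro X hX hXinf
  obtain ⟨Y, hY, hYinf, hYZX⟩ := hZ X hX hXinf
  exact ⟨Y, hY, hYinf, hYZX.trans (Set.inter_subset_inter_left X hZZ')⟩

theorem setOf_lt_shift_subset {e f g h φ : ℕ → ℕ} {c : ℕ} (hφ : Monotone φ)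
    (hef : ∀ x, e x ≤ f x + c) (hgh : ∀ x, g x ≤ h x + c) :
    {x | f x < φ (g x - c) - c} ⊆ {x | e x < φ (h x)} := by
  intro x hx
  have hφx : φ (g x - c) ≤ φ (h x) := hφ (by have := hgh x; omega)
  have := hef x
  simp only [Set.mem_ofPred_eq] at hx ⊢
  omega

theorem Often.of_leCt_of_leCt {C D : Set (Set ℕ)} {F : Set (ℕ → ℕ)} {e f g h : ℕ → ℕ}
    (hmono : ∀ φ ∈ F, Monotone φ)
    (hclosed : ∀ φ ∈ F, ∀ c : ℕ, (fun z => φ (z - c) - c) ∈ F ∧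
      (TendsInfty φ → TendsInfty fun z => φ (z - c) - c))
    (hef : LeCt e f) (hfg : Often C D F f g) (hgh : LeCt g h) : Often C D F e h := by
  obtain ⟨c₁, hc₁⟩ := hef
  obtain ⟨c₂, hc₂⟩ := hgh
  intro φ hφ hφinf
  set c := max c₁ c₂
  obtain ⟨hψ, hψinf⟩ := hclosed φ hφ c
  refine (hfg _ hψ (hψinf hφinf)).mono_s15 (setOf_lt_shift_subset (hmono φ hφ) ?_ ?_)
  · exact fun x => (hc₁ x).trans (by omega)
  · exact fun x => (hc₂ x).trans (by omega)

theorem leCt_lll_leCt (C D : Set (Set ℕ)) (F : Set (ℕ → ℕ))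
    (hmono : ∀ φ ∈ F, Monotone φ)
    (hclosed : ∀ φ ∈ F, ∀ c : ℕ, (fun z => φ (z - c) - c) ∈ F ∧
      (TendsInfty φ → TendsInfty fun z => φ (z - c) - c))
    (e f g h : ℕ → ℕ) (h1 : LeCt e f) (h2 : Lll C D F f g) (h3 : LeCt g h) :
    Lll C D F e h :=
  ⟨(h1.trans h2.1).trans h3, h2.2.of_leCt_of_leCt hmono hclosed h1 h3⟩
end
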